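/- arXiv:2001.03275 — 4 statements merged into one kernel-verified Lean document; each statement's English description precedes it below -/
import Mathlib

section
/- Let V be a nonzero finite-dimensional complex vector space, let d ≥ 2 be an integer, and let A, B, C be endomorphisms of V satisfying the Jacobi relations B∘C = C∘B, C∘A = A∘C, and A∘B − B∘A = −d·C^{d−1}. Then C is nilpotent. -/
/-!
On the generalized eigenspace `W` of `C` for an eigenvalue `μ`, which `A` and `B` preserve because
they commute with `C`, the trace of `C ^ (d - 1)` is `μ ^ (d - 1) · dim W`, while the trace of the
commutator `[A, B]` vanishes. Hence `d · μ ^ (d - 1) · dim W = 0`, so `μ = 0`. Over `ℂ`, an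
endomorphism whose only eigenvalue is `0` is nilpotent.
-/

open Module Module.End

namespace Module.End

variable {K V : Type*} [Field K] [AddCommGroup V] [Module K V] [FiniteDimensional K V]

lemma trace_pow_eq_of_isNilpotent_sub_algebraMap {f : End K V} {μ : K}
    (hf : IsNilpotent (f - algebraMap K (End K V) μ)) (n : ℕ) :
    LinearMap.trace K V (f ^ n) = μ ^ n * finrank K V := by
  induction n with
  | zero => simp
  | succ n ih =>
    rw [pow_succ, mul_eq_comp, LinearMap.trace_comp_eq_mul_of_commute_of_isNilpotent μ
      ((Commute.refl f).pow_left n) hf, ih]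
    ring

lemma eq_zero_of_isNilpotent_sub_of_commutator_eq_smul_pow [CharZero K] [Nontrivial V]
    {A B C : End K V} {μ c : K} {n : ℕ} (hC : IsNilpotent (C - algebraMap K (End K V) μ))
    (h : A * B - B * A = c • C ^ n) (hc : c ≠ 0) (hn : n ≠ 0) : μ = 0 := by
  have htrace : c * (μ ^ n * finrank K V) = 0 := by
    rw [← trace_pow_eq_of_isNilpotent_sub_algebraMap hC, ← smul_eq_mul, ← map_smul, ← h,
      map_sub, LinearMap.trace_mul_comm, sub_self]
  have hdim : (finrank K V : K) ≠ 0 := Nat.cast_ne_zero.mpr finrank_pos.ne'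
  simpa [hc, hdim, hn] using htrace

lemma HasEigenvalue.eq_zero_of_commutator_eq_smul_pow [CharZero K] {A B C : End K V}
    {μ c : K} {n : ℕ} (hμ : C.HasEigenvalue μ) (hA : Commute C A) (hB : Commute C B)
    (h : A * B - B * A = c • C ^ n) (hc : c ≠ 0) (hn : n ≠ 0) : μ = 0 := by
  set W := C.maxGenEigenspace μ
  have : Nontrivial W := Submodule.nontrivial_iff_ne_bot.mpr (hμ.lt (by simp))
  have hAW : ∀ x ∈ W, A x ∈ W := fun _ ↦ (mapsTo_maxGenEigenspace_of_comm hA μ ·)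
  have hBW : ∀ x ∈ W, B x ∈ W := fun _ ↦ (mapsTo_maxGenEigenspace_of_comm hB μ ·)
  have hCW : ∀ x ∈ W, C x ∈ W := fun _ ↦ (mapsTo_maxGenEigenspace_of_comm (.refl C) μ ·)
  refine eq_zero_of_isNilpotent_sub_of_commutator_eq_smul_pow
    (A := A.restrict hAW) (B := B.restrict hBW) (C := C.restrict hCW) ?_ ?_ hc hn
  · exact isNilpotent_restrict_maxGenEigenspace_sub_algebraMap C μ
  · ext x
    simpa [pow_restrict n hCW] using congr(($h) x)

theorem isNilpotent_of_forall_hasEigenvalue_eq_zero [IsAlgClosed K] {f : End K V}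
    (h : ∀ μ, f.HasEigenvalue μ → μ = 0) : IsNilpotent f := by
  have htop : f.maxGenEigenspace 0 = ⊤ := by
    rw [eq_top_iff, ← iSup_maxGenEigenspace_eq_top f, iSup_le_iff]
    intro μ
    by_cases hμ : f.maxGenEigenspace μ = ⊥
    · simp [hμ]
    · rw [h μ (HasUnifEigenvalue.lt zero_lt_one hμ)]
  refine ((LinearMap.charpoly_nilpotent_tfae f).out 0 2).mpr fun v ↦ ?_
  simpa using (mem_maxGenEigenspace f 0 v).mp (htop ▸ Submodule.mem_top)

end Module.End

theorem nilpotent_of_jacobi_relations_general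
    (V : Type*) [AddCommGroup V] [Module ℂ V] [FiniteDimensional ℂ V]
    (d : ℕ) (hd : 2 ≤ d) (A B C : Module.End ℂ V)
    (h1 : B * C = C * B) (h2 : C * A = A * C)
    (h3 : A * B - B * A = -((d : ℂ) • C ^ (d - 1))) :
    IsNilpotent C := by
  have hd_ne : (-d : ℂ) ≠ 0 := neg_ne_zero.mpr (Nat.cast_ne_zero.mpr (by omega))
  refine isNilpotent_of_forall_hasEigenvalue_eq_zero fun μ hμ ↦ ?_
  exact hμ.eq_zero_of_commutator_eq_smul_pow h2 h1.symm (by rw [h3, neg_smul]) hd_ne (by omega)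

/-- If `V` is a nonzero finite-dimensional complex vector space, `d ≥ 2`,
and `A, B, C` are endomorphisms of `V` satisfying the Jacobi relations of the deformed
Weyl potential `W_d = [a,b]c + c^d`, namely `B∘C = C∘B`, `C∘A = A∘C`, and
`A∘B − B∘A = −d·C^(d−1)`, then `C` is nilpotent. -/
theorem nilpotent_of_jacobi_relations
    (V : Type*) [AddCommGroup V] [Module ℂ V] [FiniteDimensional ℂ V] [Nontrivial V]
    (d : ℕ) (hd : 2 ≤ d) (A B C : Module.End ℂ V)
    (h1 : B * C = C * B) (h2 : C * A = A * C)
    (h3 : A * B - B * A = -((d : ℂ) • C ^ (d - 1))) :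
    IsNilpotent C :=
  nilpotent_of_jacobi_relations_general V d hd A B C h1 h2 h3
end

section
/- Let V be a nonzero finite-dimensional complex vector space, let d ≥ 2 be an integer, and let A, B, C be endomorphisms of V satisfying the Jacobi relations B∘C = C∘B, C∘A = A∘C, and A∘B − B∘A = −d·C^{d−1}. Suppose that every subspace of V invariant under A, B and C admits a complementary subspace invariant under A, B and C. Then C = 0 and A∘B = B∘A. -/
/-!
On a generalized eigenspace of `C` for the eigenvalue `μ`, which `A` and `B` preserve because
they commute with `C`, the trace of the commutator `[A, B]` vanishes while the trace of
`-d • C ^ (d - 1)` is `-d μ ^ (d - 1)` times the dimension; hence every eigenvalue of `C` is zero.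
The kernel of `C` is then a subrepresentation, and an invariant complement of it would be a
nonzero `C`-invariant subspace on which `C` has a nonzero eigenvalue, so `C = 0`.
-/

open LinearMap Module Module.End Set

theorem Commute.isNilpotent_pow_sub_pow {R : Type*} [Ring R] {x y : R} (h : Commute x y)
    (hxy : IsNilpotent (x - y)) (n : ℕ) : IsNilpotent (x ^ n - y ^ n) := by
  have hx : Commute (x - y) x := (Commute.refl x).sub_left h.symm
  have hy : Commute (x - y) y := h.sub_left (Commute.refl y)
  rw [← h.mul_geom_sum₂]
  exact (Commute.sum_right _ _ _ fun i _ ↦ (hx.pow_right i).mul_right (hy.pow_right _))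
    |>.isNilpotent_mul_right hxy

theorem Module.End.mapsTo_ker_of_commute {R M : Type*} [Semiring R] [AddCommMonoid M]
    [Module R M] {f g : End R M} (h : Commute f g) : MapsTo g (ker f) (ker f) := by
  intro v hv
  rw [SetLike.mem_coe, mem_ker] at hv ⊢
  rw [← mul_apply, h.eq, mul_apply, hv, map_zero]

theorem LinearMap.trace_pow_of_isNilpotent_sub_smul_one {K E : Type*} [Field K]
    [AddCommGroup E] [Module K E] [FiniteDimensional K E] {C : End K E} {μ : K}
    (hC : IsNilpotent (C - μ • 1)) (n : ℕ) : trace K E (C ^ n) = μ ^ n * finrank K E := by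
  have h := (isNilpotent_trace_of_isNilpotent
    (((Commute.one_right C).smul_right μ).isNilpotent_pow_sub_pow hC n)).eq_zero
  rwa [map_sub, smul_pow, one_pow, map_smul, trace_one, smul_eq_mul, sub_eq_zero] at h

theorem Submodule.eq_bot_of_disjoint_ker {K E : Type*} [Field K] [IsAlgClosed K]
    [AddCommGroup E] [Module K E] [FiniteDimensional K E] {f : End K E}
    (hf : ∀ μ, f.HasEigenvalue μ → μ = 0) {W : Submodule K E} (hW : MapsTo f W W)
    (hdisj : Disjoint W (ker f)) : W = ⊥ := by
  by_contra hne
  have : Nontrivial W := Submodule.nontrivial_iff_ne_bot.mpr hne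
  obtain ⟨μ, hμ⟩ := exists_eigenvalue (f.restrict hW)
  obtain ⟨x, hx⟩ := hμ.exists_hasEigenvector
  have hfx : f x = μ • (x : E) := congrArg Subtype.val hx.apply_eq_smul
  have hx0 : (x : E) ≠ 0 := by simpa using hx.2
  have hμ0 : μ = 0 := hf μ (hasEigenvalue_of_hasEigenvector ⟨mem_eigenspace_iff.mpr hfx, hx0⟩)
  exact hx0 (hdisj.le_bot ⟨x.2, by simp [hfx, hμ0]⟩)

namespace JacobiRelation

theorem restrict {R M : Type*} [CommRing R] [AddCommGroup M] [Module R M] {d : ℕ}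
    {A B C : End R M} (h3 : A * B - B * A = -((d : R) • C ^ (d - 1))) {W : Submodule R M}
    (hA : ∀ x ∈ W, A x ∈ W) (hB : ∀ x ∈ W, B x ∈ W) (hC : ∀ x ∈ W, C x ∈ W) :
    A.restrict hA * B.restrict hB - B.restrict hB * A.restrict hA =
      -((d : R) • C.restrict hC ^ (d - 1)) := by
  ext x
  rw [pow_restrict]
  exact congr($h3 x)

variable {K E : Type*} [Field K] [CharZero K] [AddCommGroup E] [Module K E]
  [FiniteDimensional K E] {d : ℕ} {A B C : End K E}

theorem eq_zero_of_isNilpotent_sub_smul_one [Nontrivial E] (hd : 2 ≤ d)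
    (h3 : A * B - B * A = -((d : K) • C ^ (d - 1))) {μ : K} (hC : IsNilpotent (C - μ • 1)) :
    μ = 0 := by
  have htrace := trace_lie A B
  rw [Ring.lie_def, h3, map_neg, map_smul, trace_pow_of_isNilpotent_sub_smul_one hC,
    neg_eq_zero, smul_eq_mul] at htrace
  simpa [show d ≠ 0 by omega, show d - 1 ≠ 0 by omega, finrank_pos.ne'] using htrace

theorem eq_zero_of_hasEigenvalue (hd : 2 ≤ d) (hA : Commute C A) (hB : Commute C B)
    (h3 : A * B - B * A = -((d : K) • C ^ (d - 1))) {μ : K} (hμ : C.HasEigenvalue μ) :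
    μ = 0 := by
  have : Nontrivial (C.maxGenEigenspace μ) := Submodule.nontrivial_iff_ne_bot.mpr <|
    ne_bot_of_le_ne_bot hμ eigenspace_le_maxGenEigenspace
  refine eq_zero_of_isNilpotent_sub_smul_one hd (restrict h3
    (mapsTo_maxGenEigenspace_of_comm hA μ) (mapsTo_maxGenEigenspace_of_comm hB μ)
    (mapsTo_maxGenEigenspace_of_comm (Commute.refl C) μ)) ?_
  convert isNilpotent_restrict_maxGenEigenspace_sub_algebraMap C μ using 1
  ext
  rfl

end JacobiRelation

theorem semisimple_jacobi_representation_commutes_general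
    (V : Type*) [AddCommGroup V] [Module ℂ V] [FiniteDimensional ℂ V]
    (d : ℕ) (hd : 2 ≤ d) (A B C : Module.End ℂ V)
    (h1 : B * C = C * B) (h2 : C * A = A * C)
    (h3 : A * B - B * A = -((d : ℂ) • C ^ (d - 1)))
    (hss : ∀ W : Submodule ℂ V,
      (∀ v ∈ W, A v ∈ W) → (∀ v ∈ W, B v ∈ W) → (∀ v ∈ W, C v ∈ W) →
      ∃ W' : Submodule ℂ V, IsCompl W W' ∧
        (∀ v ∈ W', A v ∈ W') ∧ (∀ v ∈ W', B v ∈ W') ∧ (∀ v ∈ W', C v ∈ W')) :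
    C = 0 ∧ A * B = B * A := by
  have hCA : Commute C A := h2
  have hCB : Commute C B := h1.symm
  have heigen : ∀ μ, C.HasEigenvalue μ → μ = 0 :=
    fun _ ↦ JacobiRelation.eq_zero_of_hasEigenvalue hd hCA hCB h3
  obtain ⟨W, hcompl, -, -, hWC⟩ := hss (ker C) (mapsTo_ker_of_commute hCA)
    (mapsTo_ker_of_commute hCB) (mapsTo_ker_of_commute (Commute.refl C))
  have hW : W = ⊥ := Submodule.eq_bot_of_disjoint_ker heigen hWC hcompl.disjoint.symm
  have hC : C = 0 := ker_eq_top.mp (eq_top_of_isCompl_bot (hW ▸ hcompl))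
  refine ⟨hC, ?_⟩
  rwa [hC, zero_pow (by omega), smul_zero, neg_zero, sub_eq_zero] at h3

/-- Let `V` be a nonzero finite-dimensional complex vector space, `d ≥ 2`,
and `A, B, C` endomorphisms of `V` satisfying the Jacobi relations `B∘C = C∘B`,
`C∘A = A∘C`, `A∘B − B∘A = −d·C^(d−1)`.  If every subspace of `V` invariant under
`A`, `B` and `C` admits a complementary subspace invariant under `A`, `B` and `C`
(i.e. the representation is semisimple), then `C = 0` and `A∘B = B∘A`. -/
theorem semisimple_jacobi_representation_commutes
    (V : Type*) [AddCommGroup V] [Module ℂ V] [FiniteDimensional ℂ V] [Nontrivial V]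
    (d : ℕ) (hd : 2 ≤ d) (A B C : Module.End ℂ V)
    (h1 : B * C = C * B) (h2 : C * A = A * C)
    (h3 : A * B - B * A = -((d : ℂ) • C ^ (d - 1)))
    (hss : ∀ W : Submodule ℂ V,
      (∀ v ∈ W, A v ∈ W) → (∀ v ∈ W, B v ∈ W) → (∀ v ∈ W, C v ∈ W) →
      ∃ W' : Submodule ℂ V, IsCompl W W' ∧
        (∀ v ∈ W', A v ∈ W') ∧ (∀ v ∈ W', B v ∈ W') ∧ (∀ v ∈ W', C v ∈ W')) :
    C = 0 ∧ A * B = B * A :=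
  semisimple_jacobi_representation_commutes_general V d hd A B C h1 h2 h3 hss
end

section
/- Let V be a vector space over a field K and let α, β be endomorphisms of V such that [β, [β, α]] = 0, where [f, g] = f∘g − g∘f. Then α maps the generalized kernel of β, i.e. the subspace ⋃_{k ∈ ℕ} ker(β^k), into itself. In particular, if v ∈ ker(β^m) then α(v) ∈ ker(β^{m+1}). -/
/-! Since `a` commutes with `c = a * b - b * a`, moving `b` to the left past `a ^ (n + 1)` only
produces `n + 1` copies of `c * a ^ n`, and these vanish on `ker (a ^ n)`. So `b` maps `ker (a ^ n)`
into `ker (a ^ (n + 1))` and hence preserves the generalized kernel. -/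

theorem pow_succ_mul_eq_of_commute_commutator {R : Type*} [Ring R] {a b : R}
    (h : Commute a (a * b - b * a)) (n : ℕ) :
    a ^ (n + 1) * b = b * a ^ (n + 1) + (n + 1) • ((a * b - b * a) * a ^ n) := by
  induction n with
  | zero => simp
  | succ n ih =>
    set c := a * b - b * a
    calc a ^ (n + 1 + 1) * b = a * (a ^ (n + 1) * b) := by rw [pow_succ' a (n + 1), mul_assoc]
      _ = (b * a + c) * a ^ (n + 1) + (n + 1) • (a * c * a ^ n) := by
        rw [ih, mul_add, mul_smul_comm, ← mul_assoc, ← mul_assoc, add_sub_cancel]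
      _ = b * a ^ (n + 1 + 1) + (n + 1 + 1) • (c * a ^ (n + 1)) := by
        rw [h.eq, mul_assoc c a, ← pow_succ', add_mul, mul_assoc, ← pow_succ',
          succ_nsmul _ (n + 1)]
        abel

theorem LinearMap.ker_pow_le_comap_ker_pow_succ {R M : Type*} [Ring R] [AddCommGroup M]
    [Module R M] {f g : Module.End R M} (h : Commute f (f * g - g * f)) (n : ℕ) :
    LinearMap.ker (f ^ n) ≤ (LinearMap.ker (f ^ (n + 1))).comap g := by
  intro v hv
  rw [LinearMap.mem_ker] at hv
  rw [Submodule.mem_comap, LinearMap.mem_ker, ← Module.End.mul_apply,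
    pow_succ_mul_eq_of_commute_commutator h n]
  simp [pow_succ', hv]

theorem LinearMap.iSup_ker_pow_le_comap {R M : Type*} [Ring R] [AddCommGroup M]
    [Module R M] {f g : Module.End R M} (h : Commute f (f * g - g * f)) :
    ⨆ k : ℕ, LinearMap.ker (f ^ k) ≤ (⨆ k : ℕ, LinearMap.ker (f ^ k)).comap g :=
  iSup_le fun k ↦ (LinearMap.ker_pow_le_comap_ker_pow_succ h k).trans
    (Submodule.comap_mono (le_iSup (fun k ↦ LinearMap.ker (f ^ k)) (k + 1)))

/-- Let `V` be a vector space over a field `K` and `α, β` endomorphisms of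
`V` with `[β, [β, α]] = 0`, where `[f, g] = f∘g − g∘f`.  Then `α` maps the generalized
kernel `⋃ₖ ker(β^k)` of `β` into itself; in particular, if `v ∈ ker(β^m)` then
`α(v) ∈ ker(β^(m+1))`. -/
theorem maps_generalized_kernel_of_commutator_commutes
    (K V : Type*) [Field K] [AddCommGroup V] [Module K V]
    (α β : Module.End K V)
    (h : β * (β * α - α * β) - (β * α - α * β) * β = 0) :
    (∀ v ∈ ⨆ k : ℕ, LinearMap.ker (β ^ k), α v ∈ ⨆ k : ℕ, LinearMap.ker (β ^ k)) ∧
    (∀ m : ℕ, ∀ v ∈ LinearMap.ker (β ^ m), α v ∈ LinearMap.ker (β ^ (m + 1))) := by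
  have hcomm : Commute β (β * α - α * β) := sub_eq_zero.mp h
  exact ⟨fun v hv ↦ LinearMap.iSup_ker_pow_le_comap hcomm hv,
    fun m v hv ↦ LinearMap.ker_pow_le_comap_ker_pow_succ hcomm m hv⟩
end

section
/- Let T be a topological space equipped with a continuous action of the group ℂ* of nonzero complex numbers, let d ≥ 1 be an integer, and let g : T → ℂ be a continuous function satisfying g(u • t) = u^d · g(t) for all u ∈ ℂ* and t ∈ T. Let T₁ = {t ∈ T : g(t) = 1} and let T̃ = {(t, z) ∈ T × ℂ : g(t) = exp(z)}. Then the map T₁ × ℂ → T̃ sending (t, z) to (exp(z/d) • t, z) is a homeomorphism, with inverse sending (t, z) to (exp(−z/d) • t, z). -/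
/-! Since `g (exp (z / d) • t) = exp z * g t`, acting by the unit `exp (z / d)` carries the fibre
`g = 1` onto the fibre `g = exp z`, and acting by its inverse carries it back; both maps depend
continuously on `(t, z)`. -/

open Complex

def Homeomorph.levelSetOneProdPullback {G T X M : Type*} [Group G] [TopologicalSpace G]
    [ContinuousInv G] [TopologicalSpace T] [MulAction G T] [ContinuousSMul G T]
    [TopologicalSpace X] [Monoid M] {g : T → M} {f : X → M} {s : X → G} (hs : Continuous s)
    (hgs : ∀ x t, g (s x • t) = f x * g t) (hf : ∀ x, IsUnit (f x)) :
    {t : T // g t = 1} × X ≃ₜ {p : T × X // g p.1 = f p.2} :=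
  have smul_mem_iff : ∀ x t, g (s x • t) = f x ↔ g t = 1 := fun x t => by
    rw [hgs, (hf x).mul_eq_left]
  { toFun := fun p => ⟨(s p.2 • p.1.1, p.2), (smul_mem_iff _ _).2 p.1.2⟩
    invFun := fun q => (⟨(s q.1.2)⁻¹ • q.1.1, by
      rw [← smul_mem_iff q.1.2, smul_inv_smul]; exact q.2⟩, q.1.2)
    left_inv := fun p => by simp
    right_inv := fun q => by simp
    continuous_toFun := by fun_prop
    continuous_invFun := by fun_prop }

theorem nearby_fiber_trivialization_general
    (T : Type*) [TopologicalSpace T] [MulAction ℂˣ T] [ContinuousSMul ℂˣ T]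
    (d : ℕ) (hd : 1 ≤ d) (g : T → ℂ)
    (heq : ∀ (u : ℂˣ) (t : T), g (u • t) = (u : ℂ) ^ d * g t) :
    ∃ e : ({t : T // g t = 1} × ℂ) ≃ₜ {p : T × ℂ // g p.1 = Complex.exp p.2},
      (∀ p : {t : T // g t = 1} × ℂ,
        (e p : T × ℂ) =
          (Units.mk0 (Complex.exp (p.2 / d)) (Complex.exp_ne_zero _) • p.1.1, p.2)) ∧
      (∀ q : {p : T × ℂ // g p.1 = Complex.exp p.2},
        ((e.symm q).1 : T) =
          Units.mk0 (Complex.exp (-(q : T × ℂ).2 / d)) (Complex.exp_ne_zero _) • (q : T × ℂ).1 ∧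
        (e.symm q).2 = (q : T × ℂ).2) := by
  have hd0 : (d : ℂ) ≠ 0 := Nat.cast_ne_zero.2 (by omega)
  set s : ℂ → ℂˣ := fun z => Units.mk0 (exp (z / d)) (exp_ne_zero _)
  have hs : Continuous s := Units.isEmbedding_val₀.continuous_iff.2 <|
    show Continuous fun z : ℂ => exp (z / d) by fun_prop
  have hgs : ∀ z t, g (s z • t) = exp z * g t := fun z t => by
    rw [heq, Units.val_mk0, ← exp_nat_mul, mul_div_cancel₀ _ hd0]
  refine ⟨Homeomorph.levelSetOneProdPullback hs hgs (fun z => (exp_ne_zero z).isUnit),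
    fun p => rfl, fun q => ⟨?_, rfl⟩⟩
  change (s q.1.2)⁻¹ • q.1.1 = _
  congr 1
  ext
  simp [s, neg_div, exp_neg]

/-- Let `T` be a topological space with a continuous action of `ℂ*`,
`d ≥ 1`, and `g : T → ℂ` a continuous function with `g(u • t) = u^d · g(t)`.
Let `T₁ = {t : g t = 1}` and `T̃ = {(t, z) : g t = exp z}` (the pullback of `exp`
along `g`).  Then the map `T₁ × ℂ → T̃`, `(t, z) ↦ (exp(z/d) • t, z)`, is a
homeomorphism, with inverse `(t, z) ↦ (exp(−z/d) • t, z)`. -/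
theorem nearby_fiber_trivialization
    (T : Type*) [TopologicalSpace T] [MulAction ℂˣ T] [ContinuousSMul ℂˣ T]
    (d : ℕ) (hd : 1 ≤ d) (g : T → ℂ) (hg : Continuous g)
    (heq : ∀ (u : ℂˣ) (t : T), g (u • t) = (u : ℂ) ^ d * g t) :
    ∃ e : ({t : T // g t = 1} × ℂ) ≃ₜ {p : T × ℂ // g p.1 = Complex.exp p.2},
      (∀ p : {t : T // g t = 1} × ℂ,
        (e p : T × ℂ) =
          (Units.mk0 (Complex.exp (p.2 / d)) (Complex.exp_ne_zero _) • p.1.1, p.2)) ∧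
      (∀ q : {p : T × ℂ // g p.1 = Complex.exp p.2},
        ((e.symm q).1 : T) =
          Units.mk0 (Complex.exp (-(q : T × ℂ).2 / d)) (Complex.exp_ne_zero _) • (q : T × ℂ).1 ∧
        (e.symm q).2 = (q : T × ℂ).2) :=
  nearby_fiber_trivialization_general T d hd g heq
end
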